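/- One-step energy decrease for a stabilized semi-implicit gradient-flow step in a Hilbert space: Let H be a real Hilbert space, E : H → ℝ of the form E(x) = (1/2)⟨Bx, x⟩ + G(x) + ⟨ℓ, x⟩ where B is a bounded self-adjoint nonnegative operator, G : H → ℝ is C¹ with derivative g satisfying G(y) − G(x) ≤ ⟨g(x), y − x⟩ + (L/2)‖y − x‖² for all x, y, and ℓ ∈ H. Given xⁿ, Δt > 0, and stabilization S ≥ L/2, suppose xⁿ⁺¹ satisfies (1/Δt)(xⁿ⁺¹ − xⁿ) + B xⁿ⁺¹ + S(xⁿ⁺¹ − xⁿ) + g(xⁿ) + ℓ = 0 (weakly). Then E(xⁿ⁺¹) ≤ E(xⁿ) for any Δt > 0. -/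

import Mathlib

/-!
Pair the scheme with `d = x₁ - x₀`. For symmetric `B` the quadratic part of the energy changes by
`⟪B x₁, d⟫ - ½⟪B d, d⟫`, and the one-sided Lipschitz bound on `G` gives
`G x₁ - G x₀ ≤ ⟪g x₀, d⟫ + (L/2)‖d‖²`. Substituting the paired scheme leaves
`E x₁ - E x₀ ≤ -(1/Δt + S - L/2)‖d‖² - ½⟪B d, d⟫`, which is nonpositive once `S ≥ L/2`.
-/

open RealInnerProductSpace

section

variable {H : Type*} [NormedAddCommGroup H] [InnerProductSpace ℝ H]

theorem LinearMap.IsSymmetric.inner_map_self_sub_inner_map_self {T : H →ₗ[ℝ] H}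
    (hT : T.IsSymmetric) (x y : H) :
    ⟪T y, y⟫ - ⟪T x, x⟫ = 2 * ⟪T y, y - x⟫ - ⟪T (y - x), y - x⟫ := by
  have hswap : ⟪T y, x⟫ = ⟪T x, y⟫ := by rw [hT, real_inner_comm]
  simp only [map_sub, inner_sub_left, inner_sub_right]
  linarith

theorem stabilized_step_energy_dissipation (B : H →L[ℝ] H)
    (hB : (B : H →ₗ[ℝ] H).IsSymmetric) (G : H → ℝ) (g : H → H) (L : ℝ)
    (hGL : ∀ x y : H, G y - G x ≤ ⟪g x, y - x⟫ + (L / 2) * ‖y - x‖ ^ 2)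
    (ℓ : H) (Δt S : ℝ) (x₀ x₁ : H)
    (hscheme : (1 / Δt) • (x₁ - x₀) + B x₁ + S • (x₁ - x₀) + g x₀ + ℓ = 0) :
    (1 / 2 : ℝ) * ⟪B x₁, x₁⟫ + G x₁ + ⟪ℓ, x₁⟫
        + ((1 / Δt + S - L / 2) * ‖x₁ - x₀‖ ^ 2 + (1 / 2 : ℝ) * ⟪B (x₁ - x₀), x₁ - x₀⟫)
      ≤ (1 / 2 : ℝ) * ⟪B x₀, x₀⟫ + G x₀ + ⟪ℓ, x₀⟫ := by
  set d := x₁ - x₀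
  have hpaired : (1 / Δt) * ‖d‖ ^ 2 + ⟪B x₁, d⟫ + S * ‖d‖ ^ 2 + ⟪g x₀, d⟫ + ⟪ℓ, d⟫ = 0 := by
    have := congrArg (⟪·, d⟫) hscheme
    simpa only [inner_add_left, real_inner_smul_left, inner_zero_left,
      real_inner_self_eq_norm_sq] using this
  have hquad := hB.inner_map_self_sub_inner_map_self x₀ x₁
  have hlin : ⟪ℓ, x₁⟫ - ⟪ℓ, x₀⟫ = ⟪ℓ, d⟫ := (inner_sub_right ℓ x₁ x₀).symm
  have hG := hGL x₀ x₁
  simp only [ContinuousLinearMap.coe_coe] at hquad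
  linarith

end

theorem stmt_16_general {H : Type*} [NormedAddCommGroup H] [InnerProductSpace ℝ H]
    (B : H →L[ℝ] H)
    (hBsym : ∀ x y : H, ⟪B x, y⟫ = ⟪x, B y⟫)
    (hBpos : ∀ x : H, 0 ≤ ⟪B x, x⟫)
    (G : H → ℝ) (g : H → H) (L : ℝ)
    (hGL : ∀ x y : H, G y - G x ≤ ⟪g x, y - x⟫ + (L / 2) * ‖y - x‖ ^ 2)
    (ℓ : H) (E : H → ℝ)
    (hE : ∀ x, E x = (1 / 2 : ℝ) * ⟪B x, x⟫ + G x + ⟪ℓ, x⟫)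
    (Δt S : ℝ) (hΔt : 0 < Δt) (hS : S ≥ L / 2)
    (x₀ x₁ : H)
    (hscheme : (1 / Δt) • (x₁ - x₀) + B x₁ + S • (x₁ - x₀) + g x₀ + ℓ = 0) :
    E x₁ ≤ E x₀ := by
  have hdissipation :=
    stabilized_step_energy_dissipation B hBsym G g L hGL ℓ Δt S x₀ x₁ hscheme
  have hcoeff : 0 ≤ 1 / Δt + S - L / 2 := by
    have : 0 < 1 / Δt := by positivity
    linarith
  have hdissipated :
      0 ≤ (1 / Δt + S - L / 2) * ‖x₁ - x₀‖ ^ 2 + (1 / 2 : ℝ) * ⟪B (x₁ - x₀), x₁ - x₀⟫ := by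
    have := hBpos (x₁ - x₀)
    positivity
  rw [hE, hE]
  linarith

theorem stmt_16 {H : Type*} [NormedAddCommGroup H] [InnerProductSpace ℝ H]
    [CompleteSpace H] (B : H →L[ℝ] H)
    (hBsym : ∀ x y : H, ⟪B x, y⟫ = ⟪x, B y⟫)
    (hBpos : ∀ x : H, 0 ≤ ⟪B x, x⟫)
    (G : H → ℝ) (g : H → H) (L : ℝ)
    (hg : ∀ x, HasGradientAt G (g x) x)
    (hGL : ∀ x y : H, G y - G x ≤ ⟪g x, y - x⟫ + (L / 2) * ‖y - x‖ ^ 2)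
    (ℓ : H) (E : H → ℝ)
    (hE : ∀ x, E x = (1 / 2 : ℝ) * ⟪B x, x⟫ + G x + ⟪ℓ, x⟫)
    (Δt S : ℝ) (hΔt : 0 < Δt) (hS : S ≥ L / 2)
    (x₀ x₁ : H)
    (hscheme : (1 / Δt) • (x₁ - x₀) + B x₁ + S • (x₁ - x₀) + g x₀ + ℓ = 0) :
    E x₁ ≤ E x₀ :=
  stmt_16_general B hBsym hBpos G g L hGL ℓ E hE Δt S hΔt hS x₀ x₁ hscheme
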